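/- For the Lie algebra L(3,5) = sl(2,ℝ) with brackets [f_1, f_2] = f_1, [f_1, f_3] = -2f_2, [f_2, f_3] = f_3, and orthonormal basis e_1 = αf_1, e_2 = βf_1 + εf_2, e_3 = γf_1 + ζf_2 + ιf_3 (α, ε, ι ≠ 0), the generalised Killing endomorphism matrix A computed via the structure-constant formula (A_{11} = (1/4)(c_{12}^3 - c_{13}^2 - c_{23}^1), A_{12} = -(1/2)c_{23}^2, A_{13} = -(1/2)c_{23}^3, A_{21} = (1/2)c_{13}^1, A_{22} = (1/4)(c_{12}^3 + c_{13}^2 + c_{23}^1), A_{23} = (1/2)c_{13}^3, A_{31} = -(1/2)c_{12}^1, A_{32} = -(1/2)c_{12}^2, A_{33} = (1/4)(-c_{12}^3 - c_{13}^2 + c_{23}^1)) is symmetric for every choice of α, β, γ, ε, ζ, ι with αει ≠ 0. -/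

import Mathlib

/-- The bracket of `sl(2,ℝ)` in the basis `(f_1,f_2,f_3)`: `[f_1,f_2] = f_1`, `[f_1,f_3] = -2f_2`, `[f_2,f_3] = f_3`. -/
def sl2bracket (u v : Fin 3 → ℝ) : Fin 3 → ℝ :=
  ![u 0 * v 1 - u 1 * v 0, -2 * (u 0 * v 2 - u 2 * v 0), u 1 * v 2 - u 2 * v 1]

/-- The generalised Killing endomorphism matrix built from structure constants. -/
noncomputable def gkMatrix (c12_1 c12_2 c12_3 c13_1 c13_2 c13_3 c23_1 c23_2 c23_3 : ℝ) :
    Matrix (Fin 3) (Fin 3) ℝ :=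
  !![(1/4) * (c12_3 - c13_2 - c23_1), -(1/2) * c23_2, -(1/2) * c23_3;
     (1/2) * c13_1, (1/4) * (c12_3 + c13_2 + c23_1), (1/2) * c13_3;
     -(1/2) * c12_1, -(1/2) * c12_2, (1/4) * (-c12_3 - c13_2 + c23_1)]


/-! The three symmetry conditions `A₁₂ = A₂₁`, `A₁₃ = A₃₁`, `A₂₃ = A₃₂` say exactly that
`tr ad e₃`, `tr ad e₂`, `tr ad e₁` vanish, i.e. that the Lie algebra is unimodular. This holds for
`sl(2,ℝ)`: the trace of `ad u` does not depend on the basis, and in the basis `(f₁, f₂, f₃)` the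
matrix of `ad u` visibly has zero diagonal. The vectors `e₁, e₂, e₃` form a basis since their
coefficient matrix is triangular with nonzero diagonal. -/

section StructureConstants

variable {R M ι : Type*} [CommRing R] [AddCommGroup M] [Module R M] [Fintype ι]
  {B : M →ₗ[R] M →ₗ[R] M} {b : Module.Basis ι R M} {c : ι → ι → ι → R}

theorem Module.Basis.repr_eq_of_structureConstants
    (hc : ∀ i j, B (b i) (b j) = ∑ k, c i j k • b k)
    (i j k : ι) : b.repr (B (b i) (b j)) k = c i j k := by
  rw [hc, b.repr_sum_self]

theorem LinearMap.trace_eq_sum_structureConstants [DecidableEq ι]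
    (hc : ∀ i j, B (b i) (b j) = ∑ k, c i j k • b k) (i : ι) :
    LinearMap.trace R M (B (b i)) = ∑ j, c i j j := by
  simp only [LinearMap.trace_eq_matrix_trace R b, Matrix.trace, Matrix.diag,
    LinearMap.toMatrix_apply, b.repr_eq_of_structureConstants hc]

theorem LinearMap.IsAlt.structureConstants_swap (hB : B.IsAlt)
    (hc : ∀ i j, B (b i) (b j) = ∑ k, c i j k • b k) (i j k : ι) : c j i k = -c i j k := by
  rw [← b.repr_eq_of_structureConstants hc, ← b.repr_eq_of_structureConstants hc, ← hB.neg]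
  simp

end StructureConstants

theorem gkMatrix_isSymm {c12_1 c12_2 c12_3 c13_1 c13_2 c13_3 c23_1 c23_2 c23_3 : ℝ}
    (h1 : c12_2 + c13_3 = 0) (h2 : c12_1 = c23_3) (h3 : c13_1 + c23_2 = 0) :
    (gkMatrix c12_1 c12_2 c12_3 c13_1 c13_2 c13_3 c23_1 c23_2 c23_3).IsSymm := by
  rw [Matrix.IsSymm]
  ext i j
  fin_cases i <;> fin_cases j <;> simp [gkMatrix] <;> linarith

theorem gkMatrix_isSymm_of_trace_eq_zero {M : Type*} [AddCommGroup M] [Module ℝ M]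
    {B : M →ₗ[ℝ] M →ₗ[ℝ] M} (hB : B.IsAlt) (htr : ∀ x, LinearMap.trace ℝ M (B x) = 0)
    (b : Module.Basis (Fin 3) ℝ M) {c : Fin 3 → Fin 3 → Fin 3 → ℝ}
    (hc : ∀ i j, B (b i) (b j) = ∑ k, c i j k • b k) :
    (gkMatrix (c 0 1 0) (c 0 1 1) (c 0 1 2) (c 0 2 0) (c 0 2 1) (c 0 2 2)
        (c 1 2 0) (c 1 2 1) (c 1 2 2)).IsSymm := by
  have hswap := hB.structureConstants_swap hc
  have hdiag (i k : Fin 3) : c i i k = 0 := by linarith [hswap i i k]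
  have htr' (i : Fin 3) : ∑ j, c i j j = 0 := by
    rw [← LinearMap.trace_eq_sum_structureConstants hc, htr]
  have h0 := htr' 0
  have h1 := htr' 1
  have h2 := htr' 2
  simp only [Fin.sum_univ_three, hdiag, hswap 0 1, hswap 0 2, hswap 1 2] at h0 h1 h2
  exact gkMatrix_isSymm (by linarith) (by linarith) (by linarith)

def sl2bracketBilin : (Fin 3 → ℝ) →ₗ[ℝ] (Fin 3 → ℝ) →ₗ[ℝ] (Fin 3 → ℝ) :=
  LinearMap.mk₂ ℝ sl2bracket
    (fun _ _ _ => by ext k; fin_cases k <;> simp [sl2bracket] <;> ring)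
    (fun _ _ _ => by ext k; fin_cases k <;> simp [sl2bracket] <;> ring)
    (fun _ _ _ => by ext k; fin_cases k <;> simp [sl2bracket] <;> ring)
    (fun _ _ _ => by ext k; fin_cases k <;> simp [sl2bracket] <;> ring)

theorem sl2bracketBilin_isAlt : sl2bracketBilin.IsAlt := by
  intro u
  ext k
  fin_cases k <;> simp [sl2bracketBilin, sl2bracket] <;> ring

theorem trace_sl2bracketBilin (u : Fin 3 → ℝ) : LinearMap.trace ℝ _ (sl2bracketBilin u) = 0 := by
  rw [LinearMap.trace_eq_matrix_trace ℝ (Pi.basisFun ℝ (Fin 3))]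
  simp [Matrix.trace, Fin.sum_univ_three, sl2bracketBilin, sl2bracket]

theorem sl2_gk_symm (α β γ ε ζ ι : ℝ)
    (hα : α ≠ 0) (hε : ε ≠ 0) (hι : ι ≠ 0)
    (e : Fin 3 → Fin 3 → ℝ)
    (he : e = ![![α, 0, 0], ![β, ε, 0], ![γ, ζ, ι]])
    (c : Fin 3 → Fin 3 → Fin 3 → ℝ)
    (hc : ∀ i j, sl2bracket (e i) (e j) = ∑ k, c i j k • e k) :
    (gkMatrix (c 0 1 0) (c 0 1 1) (c 0 1 2) (c 0 2 0) (c 0 2 1) (c 0 2 2)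
        (c 1 2 0) (c 1 2 1) (c 1 2 2)).IsSymm := by
  have hdet : Matrix.det (Matrix.of e) ≠ 0 := by
    subst he
    simp [Matrix.det_fin_three, hα, hε, hι]
  let b : Module.Basis (Fin 3) ℝ (Fin 3 → ℝ) :=
    basisOfLinearIndependentOfCardEqFinrank (Matrix.linearIndependent_rows_of_det_ne_zero hdet)
      (by simp)
  have hb : ⇑b = e := coe_basisOfLinearIndependentOfCardEqFinrank ..
  exact gkMatrix_isSymm_of_trace_eq_zero sl2bracketBilin_isAlt trace_sl2bracketBilin b
    (by simpa [hb, sl2bracketBilin] using hc)
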